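/- arXiv:2207.06125 — 3 statements merged into one kernel-verified Lean document; each statement's English description precedes it below -/
import Mathlib

section
/- Let 0 ≤ σ₁ < σ₂ and for i = 1,2 let V_i : (α_i,1] → ℝ be a right solution with speed σ_i. Then V₁(u) > V₂(u) for every u ∈ (max(α₁,α₂), 1). -/
/-!
Set `W = V₁ - V₂`. Since `v ↦ g(u,v)` is positive and increasing for `v > 0`, at every point
where `W ≤ 0` we get `W' = σ₁ - σ₂ + f(u) (1/g(u,V₂) - 1/g(u,V₁)) < 0`. A function whose
derivative is negative wherever it is nonpositive stays nonpositive once it is, and is then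
strictly decreasing; this is incompatible with `W(1) = 0`.
-/

open Set Filter Topology
open scoped ENNReal

noncomputable section

/-- The strip `Ω` between `-ω` and `ω` over `[0,1]`:
`Ω = {(u,s) : u ∈ [0,1], -ω(u) < s < ω(u)}`. -/
def OmegaSet (ω : ℝ → ℝ≥0∞) : Set (ℝ × ℝ) :=
  {p | p.1 ∈ Set.Icc (0:ℝ) 1 ∧ ENNReal.ofReal |p.2| < ω p.1}

/-- The set `𝒟` between `a₋ = -a₊` and `a₊` over `[0,1]`. -/
def DSet (aplus : ℝ → ℝ≥0∞) : Set (ℝ × ℝ) :=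
  {p | p.1 ∈ Set.Icc (0:ℝ) 1 ∧ ENNReal.ofReal |p.2| < aplus p.1}

/-- Standing data and hypotheses: a lower semicontinuous width `ω : [0,1] → (0,∞]`,
a regular flux `a` on `Ω` (odd in `s`, C¹, with `∂a/∂s > 0`), the maximal fluxes
`a₊(u) = lim_{s→ω(u)⁻} a(u,s)` (equivalently, the supremum over `0 < s < ω(u)`),
which are `+∞` whenever `ω(u) < ∞`, the partial inverse `g` on `𝒟` defined by
`a(u, g(u,v)) = v`, and a logistic-type reaction term `f`. -/
structure FluxData where
  ω : ℝ → ℝ≥0∞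
  a : ℝ → ℝ → ℝ
  aplus : ℝ → ℝ≥0∞
  g : ℝ → ℝ → ℝ
  f : ℝ → ℝ
  ω_pos : ∀ u ∈ Set.Icc (0:ℝ) 1, 0 < ω u
  ω_lsc : LowerSemicontinuousOn ω (Set.Icc (0:ℝ) 1)
  a_odd : ∀ u s, (u, s) ∈ OmegaSet ω → a u (-s) = - a u s
  a_C1 : ContDiffOn ℝ 1 (fun p : ℝ × ℝ => a p.1 p.2) (OmegaSet ω)
  a_deriv_pos : ∀ u s, (u, s) ∈ OmegaSet ω → ∃ d : ℝ, 0 < d ∧ HasDerivAt (a u) d s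
  aplus_def : ∀ u ∈ Set.Icc (0:ℝ) 1,
      aplus u = ⨆ s ∈ {s : ℝ | 0 < s ∧ (u, s) ∈ OmegaSet ω}, ENNReal.ofReal (a u s)
  aplus_pos : ∀ u ∈ Set.Icc (0:ℝ) 1, 0 < aplus u
  aplus_top : ∀ u ∈ Set.Icc (0:ℝ) 1, ω u < ⊤ → aplus u = ⊤
  g_spec : ∀ p ∈ DSet aplus, (p.1, g p.1 p.2) ∈ OmegaSet ω ∧ a p.1 (g p.1 p.2) = p.2
  f_C1 : ContDiffOn ℝ 1 f (Set.Icc (0:ℝ) 1)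
  f_zero : f 0 = 0
  f_one : f 1 = 0
  f_pos : ∀ u ∈ Set.Ioo (0:ℝ) 1, 0 < f u

/-- A classic traveling wave of `u_t = (b(u,u_x))_x + f(u)` moving at speed `σ`:
a C² increasing profile `u` with values in `(0,1)`, `0 < u' < ω(u)`, connecting
`0` at `-∞` to `1` at `+∞`, such that `ξ ↦ b(u(ξ),u'(ξ))` is differentiable and
`(b(u,u'))' - σ u' + f(u) = 0`. -/
def IsClassicTW (F : FluxData) (b : ℝ → ℝ → ℝ) (σ : ℝ) (u : ℝ → ℝ) : Prop :=
  ContDiff ℝ 2 u ∧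
  (∀ ξ : ℝ, u ξ ∈ Set.Ioo (0:ℝ) 1) ∧
  (∀ ξ : ℝ, 0 < deriv u ξ ∧ ENNReal.ofReal (deriv u ξ) < F.ω (u ξ)) ∧
  Filter.Tendsto u Filter.atBot (nhds 0) ∧
  Filter.Tendsto u Filter.atTop (nhds 1) ∧
  (∀ ξ : ℝ, HasDerivAt (fun t => b (u t) (deriv u t)) (σ * deriv u ξ - F.f (u ξ)) ξ)

/-- A right solution with speed `σ`: `V : (α,1] → ℝ`, continuous on `(α,1]`,
C¹ on `(α,1)`, `V(1) = 0`, and on `(α,1)` : `V > 0`, `(u,V(u)) ∈ 𝒟` and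
`V' = σ - f(u)/g(u,V(u))`. -/
def IsRightSolution (F : FluxData) (σ α : ℝ) (V : ℝ → ℝ) : Prop :=
  α ∈ Set.Ico (0:ℝ) 1 ∧
  ContinuousOn V (Set.Ioc α 1) ∧
  V 1 = 0 ∧
  ∀ u ∈ Set.Ioo α 1, 0 < V u ∧ (u, V u) ∈ DSet F.aplus ∧
    HasDerivAt V (σ - F.f u / F.g u (V u)) u

open Classical in
/-- `ℋ(u,V) = 1/g(u,V)` if `0 < V < a₊(u)`, and `0` if `V ≥ a₊(u)`. -/
def Hfun (F : FluxData) (u V : ℝ) : ℝ :=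
  if ENNReal.ofReal V < F.aplus u then 1 / F.g u V else 0

/-- The solution `𝒱_σ` of the extended problem: continuous on `[0,1]`, C¹ on `(0,1)`,
`𝒱(1) = 0`, `𝒱 > 0` on `(0,1)` and `𝒱' = σ - f(u)·ℋ(u,𝒱(u))` on `(0,1)`. -/
def IsVsol (F : FluxData) (σ : ℝ) (V : ℝ → ℝ) : Prop :=
  ContinuousOn V (Set.Icc (0:ℝ) 1) ∧ V 1 = 0 ∧
  (∀ u ∈ Set.Ioo (0:ℝ) 1, 0 < V u) ∧
  (∀ u ∈ Set.Ioo (0:ℝ) 1, HasDerivAt V (σ - F.f u * Hfun F u (V u)) u)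


theorem pos_of_hasDerivAt_neg_of_nonpos {W W' : ℝ → ℝ} {β b : ℝ}
    (hc : ContinuousOn W (Ioc β b)) (hd : ∀ x ∈ Ioo β b, HasDerivAt W (W' x) x)
    (hneg : ∀ x ∈ Ioo β b, W x ≤ 0 → W' x < 0) (hb : 0 ≤ W b) :
    ∀ x ∈ Ioo β b, 0 < W x := by
  intro x hx
  by_contra! hWx
  have hcx : ContinuousOn W (Icc x b) := hc.mono fun y hy => ⟨hx.1.trans_le hy.1, hy.2⟩
  have hIco : ∀ y ∈ Ico x b, y ∈ Ioo β b := fun y hy => ⟨hx.1.trans_le hy.1, hy.2⟩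
  have hnonpos : ∀ y ∈ Icc x b, W y ≤ 0 :=
    image_le_of_deriv_right_lt_deriv_boundary hcx
      (fun y hy => (hd y (hIco y hy)).hasDerivWithinAt) hWx (fun _ => hasDerivAt_const _ 0)
      fun y hy hy0 => hneg y (hIco y hy) hy0.le
  have hanti : StrictAntiOn W (Icc x b) := by
    refine strictAntiOn_of_deriv_neg (convex_Icc x b) hcx fun y hy => ?_
    rw [interior_Icc] at hy
    rw [(hd y (hIco y (Ioo_subset_Ico_self hy))).deriv]
    exact hneg y (hIco y (Ioo_subset_Ico_self hy)) (hnonpos y (Ioo_subset_Icc_self hy))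
  have := hanti (left_mem_Icc.2 hx.2.le) (right_mem_Icc.2 hx.2.le) hx.2
  linarith

namespace FluxData

variable (F : FluxData)

theorem strictMonoOn_a {u : ℝ} (hu : u ∈ Icc (0 : ℝ) 1) :
    StrictMonoOn (F.a u) {s : ℝ | ENNReal.ofReal |s| < F.ω u} := by
  have hopen : IsOpen {s : ℝ | ENNReal.ofReal |s| < F.ω u} :=
    isOpen_Iio.preimage (ENNReal.continuous_ofReal.comp continuous_abs)
  have hconv : Convex ℝ {s : ℝ | ENNReal.ofReal |s| < F.ω u} := by
    refine OrdConnected.convex ⟨fun x hx y hy z hz => ?_⟩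
    refine lt_of_le_of_lt (ENNReal.ofReal_le_ofReal (abs_le_max_abs_abs hz.1 hz.2)) ?_
    rw [ENNReal.ofReal_max]
    exact max_lt hx hy
  have hderiv : ∀ s ∈ {s : ℝ | ENNReal.ofReal |s| < F.ω u},
      ∃ d : ℝ, 0 < d ∧ HasDerivAt (F.a u) d s := fun s hs => F.a_deriv_pos u s ⟨hu, hs⟩
  refine strictMonoOn_of_deriv_pos hconv (fun s hs => ?_) fun s hs => ?_
  · obtain ⟨_, -, hder⟩ := hderiv s hs
    exact hder.continuousAt.continuousWithinAt
  · rw [hopen.interior_eq] at hs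
    obtain ⟨d, hd, hder⟩ := hderiv s hs
    rwa [hder.deriv]

theorem zero_mem_fiber {u : ℝ} (hu : u ∈ Icc (0 : ℝ) 1) :
    (0 : ℝ) ∈ {s : ℝ | ENNReal.ofReal |s| < F.ω u} := by
  simpa using F.ω_pos u hu

theorem a_zero {u : ℝ} (hu : u ∈ Icc (0 : ℝ) 1) : F.a u 0 = 0 := by
  have h := F.a_odd u 0 ⟨hu, F.zero_mem_fiber hu⟩
  rw [neg_zero] at h
  linarith

theorem g_pos_iff {u v : ℝ} (hv : (u, v) ∈ DSet F.aplus) : 0 < F.g u v ↔ 0 < v := by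
  obtain ⟨hmem, heq⟩ := F.g_spec (u, v) hv
  rw [← (F.strictMonoOn_a hv.1).lt_iff_lt (F.zero_mem_fiber hv.1) hmem.2]
  simp only [heq, F.a_zero hv.1]

theorem g_le_g_iff {u v₁ v₂ : ℝ} (h₁ : (u, v₁) ∈ DSet F.aplus) (h₂ : (u, v₂) ∈ DSet F.aplus) :
    F.g u v₁ ≤ F.g u v₂ ↔ v₁ ≤ v₂ := by
  obtain ⟨hm₁, he₁⟩ := F.g_spec (u, v₁) h₁
  obtain ⟨hm₂, he₂⟩ := F.g_spec (u, v₂) h₂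
  rw [← (F.strictMonoOn_a h₁.1).le_iff_le hm₁.2 hm₂.2]
  simp only [he₁, he₂]

theorem f_nonneg {u : ℝ} (hu : u ∈ Icc (0 : ℝ) 1) : 0 ≤ F.f u := by
  rcases eq_or_lt_of_le hu.1 with rfl | h0
  · exact F.f_zero.ge
  rcases eq_or_lt_of_le hu.2 with rfl | h1
  · exact F.f_one.ge
  exact (F.f_pos u ⟨h0, h1⟩).le

theorem sub_f_div_g_lt {σ₁ σ₂ u v₁ v₂ : ℝ} (hσ : σ₁ < σ₂) (h₁ : (u, v₁) ∈ DSet F.aplus)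
    (h₂ : (u, v₂) ∈ DSet F.aplus) (hv₁ : 0 < v₁) (hv : v₁ ≤ v₂) :
    σ₁ - F.f u / F.g u v₁ < σ₂ - F.f u / F.g u v₂ := by
  have hg : F.f u / F.g u v₂ ≤ F.f u / F.g u v₁ :=
    div_le_div_of_nonneg_left (F.f_nonneg h₁.1) ((F.g_pos_iff h₁).2 hv₁)
      ((F.g_le_g_iff h₁ h₂).2 hv)
  linarith

end FluxData

theorem stmt2_general (F : FluxData) (σ₁ σ₂ : ℝ) (hσ₁₂ : σ₁ < σ₂)
    (α₁ α₂ : ℝ) (V₁ V₂ : ℝ → ℝ)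
    (hV₁ : IsRightSolution F σ₁ α₁ V₁) (hV₂ : IsRightSolution F σ₂ α₂ V₂) :
    ∀ u ∈ Set.Ioo (max α₁ α₂) 1, V₂ u < V₁ u := by
  obtain ⟨-, hc₁, h1₁, hs₁⟩ := hV₁
  obtain ⟨-, hc₂, h1₂, hs₂⟩ := hV₂
  have hsol₁ (x) (hx : x ∈ Ioo (max α₁ α₂) 1) := hs₁ x ⟨(le_max_left _ _).trans_lt hx.1, hx.2⟩
  have hsol₂ (x) (hx : x ∈ Ioo (max α₁ α₂) 1) := hs₂ x ⟨(le_max_right _ _).trans_lt hx.1, hx.2⟩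
  have hcont : ContinuousOn (fun x => V₁ x - V₂ x) (Ioc (max α₁ α₂) 1) :=
    (hc₁.mono (Ioc_subset_Ioc_left (le_max_left _ _))).sub
      (hc₂.mono (Ioc_subset_Ioc_left (le_max_right _ _)))
  have hderiv_neg : ∀ x ∈ Ioo (max α₁ α₂) 1, V₁ x - V₂ x ≤ 0 →
      (σ₁ - F.f x / F.g x (V₁ x)) - (σ₂ - F.f x / F.g x (V₂ x)) < 0 := fun x hx hW =>
    sub_neg.2 <| F.sub_f_div_g_lt hσ₁₂ (hsol₁ x hx).2.1 (hsol₂ x hx).2.1 (hsol₁ x hx).1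
      (sub_nonpos.1 hW)
  intro u hu
  exact sub_pos.1 <| pos_of_hasDerivAt_neg_of_nonpos hcont
    (fun x hx => (hsol₁ x hx).2.2.sub (hsol₂ x hx).2.2) hderiv_neg (by simp [h1₁, h1₂]) u hu

theorem stmt2 (F : FluxData) (σ₁ σ₂ : ℝ) (hσ₁ : 0 ≤ σ₁) (hσ₁₂ : σ₁ < σ₂)
    (α₁ α₂ : ℝ) (V₁ V₂ : ℝ → ℝ)
    (hV₁ : IsRightSolution F σ₁ α₁ V₁) (hV₂ : IsRightSolution F σ₂ α₂ V₂) :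
    ∀ u ∈ Set.Ioo (max α₁ α₂) 1, V₂ u < V₁ u :=
  stmt2_general F σ₁ σ₂ hσ₁₂ α₁ α₂ V₁ V₂ hV₁ hV₂
end
end

section
/- Assume (H_c). Let (u_p, s_p) be a sequence in [0,1] × (0,∞) with s_p < ω(u_p) for every p, u_p → u₀ ∈ [0,1], and s_p → +∞. Then a(u_p,s_p) → a₊(u₀) in [0,+∞] (in particular, if a₊(u₀) = +∞ then a(u_p,s_p) → +∞). -/
open Set Filter Topology
open scoped ENNReal

noncomputable section

/-! From above, `a(u_p, s_p) ≤ a₊(u_p) → a₊(u₀)` by (H_c). From below, fix `s` with `a(u₀, s)`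
close to `a₊(u₀)`: eventually `s ≤ s_p`, so by monotonicity in `s` and continuity of `a`,
`a(u_p, s_p) ≥ a(u_p, s) → a(u₀, s)`. -/

lemma mem_omegaSet_of_abs_le {ω : ℝ → ℝ≥0∞} {u s t : ℝ} (hst : |s| ≤ |t|)
    (ht : (u, t) ∈ OmegaSet ω) : (u, s) ∈ OmegaSet ω :=
  ⟨ht.1, (ENNReal.ofReal_le_ofReal hst).trans_lt ht.2⟩

lemma ordConnected_omegaSet_slice (ω : ℝ → ℝ≥0∞) (u : ℝ) :
    OrdConnected {s | (u, s) ∈ OmegaSet ω} := by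
  refine ⟨fun s hs t ht x hx => ?_⟩
  rcases le_max_iff.1 (abs_le_max_abs_abs hx.1 hx.2) with h | h
  · exact mem_omegaSet_of_abs_le h hs
  · exact mem_omegaSet_of_abs_le h ht

namespace FluxData

variable (F : FluxData)

lemma strictMonoOn_a_s10 (u : ℝ) : StrictMonoOn (F.a u) {s | (u, s) ∈ OmegaSet F.ω} := by
  refine strictMonoOn_of_deriv_pos (ordConnected_omegaSet_slice F.ω u).convex
    (fun s hs => ?_) (fun s hs => ?_)
  · obtain ⟨d, -, hd⟩ := F.a_deriv_pos u s hs
    exact hd.continuousAt.continuousWithinAt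
  · have hs' : s ∈ {s | (u, s) ∈ OmegaSet F.ω} := interior_subset hs
    obtain ⟨d, hd_pos, hd⟩ := F.a_deriv_pos u s hs'
    rwa [hd.deriv]

lemma ofReal_a_le_aplus {u s : ℝ} (hs : 0 < s) (hΩ : (u, s) ∈ OmegaSet F.ω) :
    ENNReal.ofReal (F.a u s) ≤ F.aplus u := by
  rw [F.aplus_def u hΩ.1]
  exact le_iSup₂ (f := fun s _ => ENNReal.ofReal (F.a u s)) s ⟨hs, hΩ⟩

lemma exists_lt_ofReal_a {u : ℝ} (hu : u ∈ Icc (0:ℝ) 1) {c : ℝ≥0∞} (hc : c < F.aplus u) :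
    ∃ s, 0 < s ∧ (u, s) ∈ OmegaSet F.ω ∧ c < ENNReal.ofReal (F.a u s) := by
  rw [F.aplus_def u hu] at hc
  simpa only [lt_iSup_iff, mem_ofPred_eq, exists_prop, and_assoc] using hc

lemma eventually_lt_ofReal_a {ι : Type*} {l : Filter ι} {up sp : ι → ℝ} {u₀ : ℝ}
    (hu₀ : u₀ ∈ Icc (0:ℝ) 1) (hmem : ∀ p, (up p, sp p) ∈ OmegaSet F.ω)
    (hup : Tendsto up l (𝓝 u₀)) (hsp : Tendsto sp l atTop) {c : ℝ≥0∞}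
    (hc : c < F.aplus u₀) :
    ∀ᶠ p in l, c < ENNReal.ofReal (F.a (up p) (sp p)) := by
  obtain ⟨s, hs_pos, hsΩ, hcs⟩ := F.exists_lt_ofReal_a hu₀ hc
  have hs_le : ∀ᶠ p in l, s ≤ sp p := hsp.eventually_ge_atTop s
  have hs_mem : ∀ᶠ p in l, (up p, s) ∈ OmegaSet F.ω := by
    filter_upwards [hs_le] with p hp
    refine mem_omegaSet_of_abs_le ?_ (hmem p)
    rwa [abs_of_pos hs_pos, abs_of_pos (hs_pos.trans_le hp)]
  have ha_tendsto : Tendsto (fun p => F.a (up p) s) l (𝓝 (F.a u₀ s)) :=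
    (F.a_C1.continuousOn _ hsΩ).tendsto.comp
      (tendsto_nhdsWithin_iff.2 ⟨hup.prodMk_nhds tendsto_const_nhds, hs_mem⟩)
  filter_upwards [(ENNReal.continuous_ofReal.tendsto _ |>.comp ha_tendsto).eventually_const_lt
    hcs, hs_le, hs_mem] with p hp hp_le hp_mem
  exact hp.trans_le <| ENNReal.ofReal_le_ofReal <|
    (F.strictMonoOn_a_s10 (up p)).monotoneOn hp_mem (hmem p) hp_le

end FluxData

theorem stmt10 (F : FluxData) (hc : ContinuousOn F.aplus (Set.Icc (0:ℝ) 1))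
    (up sp : ℕ → ℝ) (u₀ : ℝ) (hu₀ : u₀ ∈ Set.Icc (0:ℝ) 1)
    (hmem : ∀ p : ℕ, 0 < sp p ∧ (up p, sp p) ∈ OmegaSet F.ω)
    (hup : Filter.Tendsto up Filter.atTop (nhds u₀))
    (hsp : Filter.Tendsto sp Filter.atTop Filter.atTop) :
    Filter.Tendsto (fun p => ENNReal.ofReal (F.a (up p) (sp p))) Filter.atTop
      (nhds (F.aplus u₀)) := by
  have haplus : Tendsto (fun p => F.aplus (up p)) atTop (𝓝 (F.aplus u₀)) :=
    (hc u₀ hu₀).tendsto.comp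
      (tendsto_nhdsWithin_iff.2 ⟨hup, .of_forall fun p => (hmem p).2.1⟩)
  refine tendsto_order.2 ⟨fun c hc' => ?_, fun c hc' => ?_⟩
  · exact F.eventually_lt_ofReal_a hu₀ (fun p => (hmem p).2) hup hsp hc'
  · filter_upwards [haplus.eventually_lt_const hc'] with p hp
    exact (F.ofReal_a_le_aplus (hmem p).1 (hmem p).2).trans_lt hp
end
end

section
/- Assume (H_c). Fix σ ≥ 0 and suppose 0 < μ < ν < 1 satisfy: a₊(u) ≤ 𝒱_σ(u) for all u ∈ [μ,ν], 𝒱_σ(μ) = a₊(μ), and 𝒱_σ(ν) = a₊(ν). Then (a₊(ν) − a₊(μ))/(ν − μ) = σ (Rankine–Hugoniot), and for every u ∈ (μ,ν]: (a₊(u) − a₊(μ))/(u − μ) ≤ (a₊(ν) − a₊(μ))/(ν − μ) (Bertsch–Dal Passo condition). -/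
open Set Filter Topology
open scoped ENNReal

noncomputable section

/-! Where `𝒱_σ ≥ a₊` the term `ℋ` vanishes, so `𝒱_σ' = σ` on `[μ, ν]` and `𝒱_σ` is affine
there with slope `σ`. Since `a₊` touches this line at `μ` and `ν` and lies below it in between,
both the Rankine–Hugoniot identity and the Bertsch–Dal Passo inequality follow. -/

theorem eq_add_mul_sub_of_hasDerivAt_const {V : ℝ → ℝ} {a b c : ℝ}
    (hV : ContinuousOn V (Icc a b)) (hderiv : ∀ x ∈ Ioo a b, HasDerivAt V c x) :
    ∀ x ∈ Icc a b, V x = V a + c * (x - a) := by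
  rintro x ⟨hax, hxb⟩
  rcases hax.eq_or_lt with rfl | hax
  · ring
  obtain ⟨_, _, hslope⟩ := exists_hasDerivAt_eq_slope V (fun _ => c) hax
    (hV.mono (Icc_subset_Icc_right hxb))
    (fun y hy => hderiv y ⟨hy.1, hy.2.trans_le hxb⟩)
  rw [eq_div_iff (sub_ne_zero.2 hax.ne')] at hslope
  linarith

theorem Hfun_eq_zero_of_aplus_le {F : FluxData} {u V : ℝ}
    (h : F.aplus u ≤ ENNReal.ofReal V) : Hfun F u V = 0 :=
  if_neg h.not_gt

namespace IsVsol

variable {F : FluxData} {σ : ℝ} {𝒱 : ℝ → ℝ}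

theorem hasDerivAt_of_aplus_le (h𝒱 : IsVsol F σ 𝒱) {u : ℝ} (hu : u ∈ Ioo (0:ℝ) 1)
    (hle : F.aplus u ≤ ENNReal.ofReal (𝒱 u)) : HasDerivAt 𝒱 σ u := by
  simpa [Hfun_eq_zero_of_aplus_le hle] using h𝒱.2.2.2 u hu

theorem eq_affine_of_aplus_le (h𝒱 : IsVsol F σ 𝒱) {μ ν : ℝ} (hμ : 0 < μ) (hν : ν < 1)
    (hle : ∀ u ∈ Icc μ ν, F.aplus u ≤ ENNReal.ofReal (𝒱 u)) :
    ∀ u ∈ Icc μ ν, 𝒱 u = 𝒱 μ + σ * (u - μ) :=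
  eq_add_mul_sub_of_hasDerivAt_const (h𝒱.1.mono (Icc_subset_Icc hμ.le hν.le))
    fun x hx => h𝒱.hasDerivAt_of_aplus_le ⟨hμ.trans hx.1, hx.2.trans hν⟩
      (hle x (Ioo_subset_Icc_self hx))

end IsVsol

theorem stmt12_general (F : FluxData)
    (σ : ℝ) (𝒱σ : ℝ → ℝ) (h𝒱σ : IsVsol F σ 𝒱σ)
    (μ ν : ℝ) (hμ : 0 < μ) (hμν : μ < ν) (hν : ν < 1)
    (hle : ∀ u ∈ Set.Icc μ ν, F.aplus u ≤ ENNReal.ofReal (𝒱σ u))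
    (heqμ : F.aplus μ = ENNReal.ofReal (𝒱σ μ))
    (heqν : F.aplus ν = ENNReal.ofReal (𝒱σ ν)) :
    ((F.aplus ν).toReal - (F.aplus μ).toReal) / (ν - μ) = σ ∧
    ∀ u ∈ Set.Ioc μ ν,
      ((F.aplus u).toReal - (F.aplus μ).toReal) / (u - μ) ≤
        ((F.aplus ν).toReal - (F.aplus μ).toReal) / (ν - μ) := by
  have hpos : ∀ u ∈ Icc μ ν, 0 < 𝒱σ u := fun u hu =>
    h𝒱σ.2.2.1 u ⟨hμ.trans_le hu.1, hu.2.trans_lt hν⟩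
  have haffine := h𝒱σ.eq_affine_of_aplus_le hμ hν hle
  have hμ_val : (F.aplus μ).toReal = 𝒱σ μ := by
    rw [heqμ, ENNReal.toReal_ofReal (hpos μ ⟨le_rfl, hμν.le⟩).le]
  have hν_val : (F.aplus ν).toReal = 𝒱σ μ + σ * (ν - μ) := by
    rw [heqν, ENNReal.toReal_ofReal (hpos ν ⟨hμν.le, le_rfl⟩).le, haffine ν ⟨hμν.le, le_rfl⟩]
  have hRH : ((F.aplus ν).toReal - (F.aplus μ).toReal) / (ν - μ) = σ := by
    rw [hν_val, hμ_val, add_sub_cancel_left, mul_div_cancel_right₀ _ (sub_ne_zero.2 hμν.ne')]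
  refine ⟨hRH, fun u hu => ?_⟩
  have hu' : u ∈ Icc μ ν := Ioc_subset_Icc_self hu
  have hu_le : (F.aplus u).toReal ≤ 𝒱σ μ + σ * (u - μ) := by
    rw [← haffine u hu']
    exact ENNReal.toReal_le_of_le_ofReal (hpos u hu').le (hle u hu')
  rw [hRH, div_le_iff₀ (sub_pos.2 hu.1), hμ_val]
  linarith

theorem stmt12 (F : FluxData) (hc : ContinuousOn F.aplus (Set.Icc (0:ℝ) 1))
    (σ : ℝ) (hσ : 0 ≤ σ) (𝒱σ : ℝ → ℝ) (h𝒱σ : IsVsol F σ 𝒱σ)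
    (μ ν : ℝ) (hμ : 0 < μ) (hμν : μ < ν) (hν : ν < 1)
    (hle : ∀ u ∈ Set.Icc μ ν, F.aplus u ≤ ENNReal.ofReal (𝒱σ u))
    (heqμ : F.aplus μ = ENNReal.ofReal (𝒱σ μ))
    (heqν : F.aplus ν = ENNReal.ofReal (𝒱σ ν)) :
    ((F.aplus ν).toReal - (F.aplus μ).toReal) / (ν - μ) = σ ∧
    ∀ u ∈ Set.Ioc μ ν,
      ((F.aplus u).toReal - (F.aplus μ).toReal) / (u - μ) ≤
        ((F.aplus ν).toReal - (F.aplus μ).toReal) / (ν - μ) :=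
  stmt12_general F σ 𝒱σ h𝒱σ μ ν hμ hμν hν hle heqμ heqν
end
end
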